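/- Let A, B, C be pairwise disjoint nonempty finite subsets of X with sizes a, b, c. Then the orthogonal projection of δ_{A|C} + δ_{B|C} onto the orthogonal complement of the line spanned by δ_{A|B} + δ_{A|C} + δ_{B|C} equals p_{AB} := (−(ac+bc)/(ab+ac+bc))·δ_{A|B} + (ab/(ab+ac+bc))·(δ_{A|C} + δ_{B|C}). -/

import Mathlib

open Finset
open scoped Classical

variable {X : Type*} [Fintype X] [DecidableEq X]

/-- Split pseudometric: coordinate at pair s is 1 if s meets both U and V, else 0. -/
noncomputable def splitDelta (U V : Finset X) : EuclideanSpace ℝ (Sym2 X) :=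
  WithLp.toLp 2 (fun s => if (∃ i ∈ s, i ∈ U) ∧ (∃ j ∈ s, j ∈ V) then 1 else 0)

/-! A pair meets at most two of the pairwise disjoint sets `A`, `B`, `C`, so `δ_{A|B}`, `δ_{A|C}`,
`δ_{B|C}` are pairwise orthogonal, and `‖δ_{U|V}‖² = |U| |V|` because the pairs meeting both `U`
and `V` are the `s(i, j)` with `(i, j) ∈ U × V`. Projecting `x + y` away from `u + x + y` for
pairwise orthogonal `u, x, y` subtracts `(‖x‖² + ‖y‖²) / (‖u‖² + ‖x‖² + ‖y‖²)` times `u + x + y`. -/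

theorem Submodule.starProjection_orthogonal_span_singleton {E : Type*} [NormedAddCommGroup E]
    [InnerProductSpace ℝ E] [CompleteSpace E] (v w : E) :
    (ℝ ∙ v)ᗮ.starProjection w = w - (inner ℝ v w / ‖v‖ ^ 2) • v := by
  rw [starProjection_orthogonal_val, starProjection_singleton]
  rfl

theorem starProjection_orthogonal_span_add_of_orthogonal {E : Type*} [NormedAddCommGroup E]
    [InnerProductSpace ℝ E] [CompleteSpace E] {u x y : E}
    (hux : inner ℝ u x = 0) (huy : inner ℝ u y = 0) (hxy : inner ℝ x y = 0) :
    (ℝ ∙ (u + x + y))ᗮ.starProjection (x + y) =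
      (-(‖x‖ ^ 2 + ‖y‖ ^ 2) / (‖u‖ ^ 2 + ‖x‖ ^ 2 + ‖y‖ ^ 2)) • u +
        (‖u‖ ^ 2 / (‖u‖ ^ 2 + ‖x‖ ^ 2 + ‖y‖ ^ 2)) • (x + y) := by
  have hnorm : ‖u + x + y‖ ^ 2 = ‖u‖ ^ 2 + ‖x‖ ^ 2 + ‖y‖ ^ 2 := by
    rw [norm_add_sq_real, norm_add_sq_real, inner_add_left, hux, huy, hxy]
    ring
  have hinner : inner ℝ (u + x + y) (x + y) = ‖x‖ ^ 2 + ‖y‖ ^ 2 := by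
    rw [add_assoc, inner_add_left, inner_add_right, hux, huy, real_inner_self_eq_norm_sq,
      norm_add_sq_real, hxy]
    ring
  rw [Submodule.starProjection_orthogonal_span_singleton, hnorm, hinner]
  rcases eq_or_ne (‖u‖ ^ 2 + ‖x‖ ^ 2 + ‖y‖ ^ 2) 0 with hS | hS
  · have hzero : ‖u‖ ^ 2 = 0 ∧ ‖x‖ ^ 2 = 0 ∧ ‖y‖ ^ 2 = 0 := by
      refine ⟨?_, ?_, ?_⟩ <;> nlinarith [sq_nonneg ‖u‖, sq_nonneg ‖x‖, sq_nonneg ‖y‖]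
    simp_all
  · match_scalars <;> field_simp <;> ring

theorem Sym2.not_meets_of_pairwise_disjoint {α : Type*} {A B C : Finset α} (hAB : Disjoint A B)
    (hAC : Disjoint A C) (hBC : Disjoint B C) (s : Sym2 α) (hA : ∃ i ∈ s, i ∈ A)
    (hB : ∃ i ∈ s, i ∈ B) : ¬ ∃ i ∈ s, i ∈ C := by
  induction s using Sym2.inductionOn with
  | hf x y =>
    simp only [Sym2.mem_iff, exists_eq_or_imp, exists_eq_left] at *
    rw [Finset.disjoint_left] at hAB hAC hBC
    grind

theorem card_sym2_meeting_both_eq_mul (U V : Finset X) (h : Disjoint U V) :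
    #{s : Sym2 X | (∃ i ∈ s, i ∈ U) ∧ ∃ j ∈ s, j ∈ V} = #U * #V := by
  have himage : ({s : Sym2 X | (∃ i ∈ s, i ∈ U) ∧ ∃ j ∈ s, j ∈ V} : Finset (Sym2 X)) =
      (U ×ˢ V).image fun p => s(p.1, p.2) := by
    ext s
    induction s using Sym2.inductionOn with
    | hf x y =>
      simp only [mem_filter, mem_univ, true_and, mem_image, mem_product, Sym2.mem_iff,
        exists_eq_or_imp, exists_eq_left, Prod.exists]
      rw [Finset.disjoint_left] at h
      grind
  rw [himage, card_image_of_injOn, card_product]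
  rintro ⟨i, j⟩ hij ⟨i', j'⟩ hij' he
  simp only [coe_product, Set.mem_prod, mem_coe] at hij hij'
  rcases Sym2.mk_eq_mk_iff.mp he with he | he
  · exact he
  · simp only [Prod.swap_prod_mk, Prod.mk.injEq] at he
    exact (Finset.disjoint_left.mp h hij.1 (he.1 ▸ hij'.2)).elim

theorem splitDelta_comm (U V : Finset X) : splitDelta U V = splitDelta V U := by
  simp only [splitDelta, and_comm]

theorem inner_splitDelta (U V U' V' : Finset X) :
    inner ℝ (splitDelta U V) (splitDelta U' V') =
      #{s : Sym2 X | ((∃ i ∈ s, i ∈ U) ∧ ∃ j ∈ s, j ∈ V) ∧ ((∃ i ∈ s, i ∈ U') ∧ ∃ j ∈ s, j ∈ V')} := by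
  simp [splitDelta, PiLp.inner_apply, ← ite_and, Finset.sum_boole]

theorem norm_splitDelta_sq {U V : Finset X} (h : Disjoint U V) :
    ‖splitDelta U V‖ ^ 2 = #U * #V := by
  rw [← real_inner_self_eq_norm_sq, inner_splitDelta]
  simp only [and_self]
  exact_mod_cast card_sym2_meeting_both_eq_mul U V h

theorem inner_splitDelta_eq_zero {A B C : Finset X} (hAB : Disjoint A B) (hAC : Disjoint A C)
    (hBC : Disjoint B C) : inner ℝ (splitDelta A B) (splitDelta A C) = 0 := by
  rw [inner_splitDelta, Nat.cast_eq_zero, card_eq_zero, filter_eq_empty_iff]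
  rintro s - ⟨⟨hA, hB⟩, -, hC⟩
  exact Sym2.not_meets_of_pairwise_disjoint hAB hAC hBC s hA hB hC

theorem projection_eq_pAB_general (A B C : Finset X)
    (hAB : Disjoint A B) (hAC : Disjoint A C) (hBC : Disjoint B C) :
    let a : ℝ := A.card; let b : ℝ := B.card; let c : ℝ := C.card
    (Submodule.orthogonalProjectionOnto
        ((ℝ ∙ (splitDelta A B + splitDelta A C + splitDelta B C))ᗮ)
        (splitDelta A C + splitDelta B C) : EuclideanSpace ℝ (Sym2 X)) =
      (-(a * c + b * c) / (a * b + a * c + b * c)) • splitDelta A B +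
        (a * b / (a * b + a * c + b * c)) • (splitDelta A C + splitDelta B C) := by
  have hABBC : inner ℝ (splitDelta A B) (splitDelta B C) = 0 := by
    rw [splitDelta_comm A B]
    exact inner_splitDelta_eq_zero hAB.symm hBC hAC
  have hACBC : inner ℝ (splitDelta A C) (splitDelta B C) = 0 := by
    rw [splitDelta_comm A C, splitDelta_comm B C]
    exact inner_splitDelta_eq_zero hAC.symm hBC.symm hAB
  have h := starProjection_orthogonal_span_add_of_orthogonal
    (inner_splitDelta_eq_zero hAB hAC hBC) hABBC hACBC
  rw [norm_splitDelta_sq hAB, norm_splitDelta_sq hAC, norm_splitDelta_sq hBC] at h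
  rw [Submodule.coe_orthogonalProjectionOnto_apply]
  exact h

/-- The orthogonal projection of δ_{A|C} + δ_{B|C} onto the orthogonal complement of the
line spanned by δ_{A|B} + δ_{A|C} + δ_{B|C} equals
p_{AB} = (−(ac+bc)/(ab+ac+bc))·δ_{A|B} + (ab/(ab+ac+bc))·(δ_{A|C} + δ_{B|C}). -/
theorem projection_eq_pAB (A B C : Finset X)
    (hA : A.Nonempty) (hB : B.Nonempty) (hC : C.Nonempty)
    (hAB : Disjoint A B) (hAC : Disjoint A C) (hBC : Disjoint B C) :
    let a : ℝ := A.card; let b : ℝ := B.card; let c : ℝ := C.card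
    (Submodule.orthogonalProjectionOnto
        ((ℝ ∙ (splitDelta A B + splitDelta A C + splitDelta B C))ᗮ)
        (splitDelta A C + splitDelta B C) : EuclideanSpace ℝ (Sym2 X)) =
      (-(a * c + b * c) / (a * b + a * c + b * c)) • splitDelta A B +
        (a * b / (a * b + a * c + b * c)) • (splitDelta A C + splitDelta B C) :=
  projection_eq_pAB_general A B C hAB hAC hBC
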